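/- For every point p ∈ Q1((0,0), 2ε) \ Q1((0,0), ε) and every q ∈ ℝ² with dist(p, q) = 1, the closed segment [p, q] is not contained in the tunnel T. Likewise, for every point p ∈ Q4((0,0.6), 2ε) \ Q4((0,0.6), ε) and every q ∈ ℝ² with dist(p, q) = 1, the closed segment [p, q] is not contained in T. -/

import Mathlib

noncomputable section

open Set

/-- The Euclidean plane. -/
abbrev E2 := EuclideanSpace ℝ (Fin 2)

/-- The point of `ℝ²` with coordinates `x` and `y`. -/
def pt (x y : ℝ) : E2 := (WithLp.equiv 2 (Fin 2 → ℝ)).symm ![x, y]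

/-- Piecewise-linear interpolation through a list of breakpoints `(xᵢ, yᵢ)`
(with strictly increasing `xᵢ`), evaluated at `x`. -/
def pl : List (ℝ × ℝ) → ℝ → ℝ
  | [], _ => 0
  | [(_, y₀)], _ => y₀
  | (x₀, y₀) :: (x₁, y₁) :: rest, x =>
      if x ≤ x₁ then y₀ + (y₁ - y₀) * (x - x₀) / (x₁ - x₀)
      else pl ((x₁, y₁) :: rest) x

/-- The quadrant area `Q1(c, r)`: points of the closed disc of radius `r` around `c`
that lie (weakly) to the upper right of `c`. -/
def Q1 (c : E2) (r : ℝ) : Set E2 := {p | dist p c ≤ r ∧ c 0 ≤ p 0 ∧ c 1 ≤ p 1}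

/-- The quadrant area `Q2(c, r)` (upper left). -/
def Q2 (c : E2) (r : ℝ) : Set E2 := {p | dist p c ≤ r ∧ p 0 ≤ c 0 ∧ c 1 ≤ p 1}

/-- The quadrant area `Q3(c, r)` (lower left). -/
def Q3 (c : E2) (r : ℝ) : Set E2 := {p | dist p c ≤ r ∧ p 0 ≤ c 0 ∧ p 1 ≤ c 1}

/-- The quadrant area `Q4(c, r)` (lower right). -/
def Q4 (c : E2) (r : ℝ) : Set E2 := {p | dist p c ≤ r ∧ c 0 ≤ p 0 ∧ p 1 ≤ c 1}

/-- The breakpoints of the lower boundary polyline of the tunnel (here `ε' = ε/2`). -/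
def tunnelLowerPts (ε : ℝ) : List (ℝ × ℝ) :=
  [(0, 0), (ε / 2, 0), (0.4, 0.3 - ε / 2), (0.8 - ε / 2, 0), (0.8, 0),
   (0.8 + ε / 2, 0), (1.2, 0.3 - ε / 2), (1.6 - ε / 2, 0), (1.6, 0)]

/-- The breakpoints of the upper boundary polyline of the tunnel (here `ε' = ε/2`). -/
def tunnelUpperPts (ε : ℝ) : List (ℝ × ℝ) :=
  [(0, 0.6), (ε / 2, 0.6), (0.4, 0.3 + ε / 2), (0.8 - ε / 2, 0.6), (0.8, 0.6),
   (0.8 + ε / 2, 0.6), (1.2, 0.3 + ε / 2), (1.6 - ε / 2, 0.6), (1.6, 0.6)]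

/-- Obstacle OT1: the triangle with vertices `(0, ε')`, `(0.4 − ε', 0.3)`, `(0, 0.6 − ε')`. -/
def OT1 (ε : ℝ) : Set E2 :=
  convexHull ℝ {pt 0 (ε / 2), pt (0.4 - ε / 2) 0.3, pt 0 (0.6 - ε / 2)}

/-- Obstacle OT2: the rhombus with vertices `(0.4 + ε', 0.3)`, `(0.8, ε')`,
`(1.2 − ε', 0.3)`, `(0.8, 0.6 − ε')`. -/
def OT2 (ε : ℝ) : Set E2 :=
  convexHull ℝ {pt (0.4 + ε / 2) 0.3, pt 0.8 (ε / 2), pt (1.2 - ε / 2) 0.3, pt 0.8 (0.6 - ε / 2)}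

/-- Obstacle OT3: the triangle with vertices `(1.6, ε')`, `(1.2 + ε', 0.3)`, `(1.6, 0.6 − ε')`. -/
def OT3 (ε : ℝ) : Set E2 :=
  convexHull ℝ {pt 1.6 (ε / 2), pt (1.2 + ε / 2) 0.3, pt 1.6 (0.6 - ε / 2)}

/-- The tunnel `T`: the closed region between the lower and upper sawtooth polylines
over `0 ≤ x ≤ 1.6`, with the interiors of the three obstacles OT1, OT2, OT3 removed. -/
def tunnel (ε : ℝ) : Set E2 :=
  {p | 0 ≤ p 0 ∧ p 0 ≤ 1.6 ∧
      pl (tunnelLowerPts ε) (p 0) ≤ p 1 ∧ p 1 ≤ pl (tunnelUpperPts ε) (p 0)} \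
    (interior (OT1 ε) ∪ interior (OT2 ε) ∪ interior (OT3 ε))

/-
At `x = 0.4` the tunnel is only the window `0.3 ± ε/2`, and since the segment cannot enter OT2,
it crosses the line `x = 0.8` within `ε/2` of the floor or the ceiling.
Crossing low forces a slope below `-0.7`, so the segment leaves through the floor. Crossing high
forces a slope of about `3/4`, so the far end, at distance `1`, lies near `p + (0.8, 0.6)`, just
where the ceiling starts to descend with slope about `-3/4`. Keeping the far end under the ceiling
pins it within `0.6ε` of `x = 0.8`, and then `p` lies in the box `[0, 0.6ε] × [0, 0.78ε]`, inside
the disc of radius `ε`. The corner `(0, 0.6)` is the mirror image under `y ↦ 0.6 - y`.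
-/

@[simp] lemma pt_apply_zero (x y : ℝ) : pt x y 0 = x := rfl
@[simp] lemma pt_apply_one (x y : ℝ) : pt x y 1 = y := rfl

lemma eq_pt_iff {w : E2} {x y : ℝ} : w = pt x y ↔ w 0 = x ∧ w 1 = y := by
  refine ⟨fun h => by simp [h], fun ⟨h₀, h₁⟩ => PiLp.ext fun i => ?_⟩
  fin_cases i <;> simp [h₀, h₁]

lemma dist_sq_eq (p q : E2) : dist p q ^ 2 = (p 0 - q 0) ^ 2 + (p 1 - q 1) ^ 2 := by
  rw [EuclideanSpace.dist_eq, Real.sq_sqrt (by positivity), Fin.sum_univ_two,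
    Real.dist_eq, Real.dist_eq, sq_abs, sq_abs]

lemma pt_mem_segment {p q : E2} {s x : ℝ} (hpq : p 0 < q 0) (hs : q 1 - p 1 = s * (q 0 - p 0))
    (hpx : p 0 ≤ x) (hxq : x ≤ q 0) : pt x (p 1 + s * (x - p 0)) ∈ segment ℝ p q := by
  have hD : 0 < q 0 - p 0 := sub_pos.mpr hpq
  rw [segment_eq_image']
  refine ⟨(x - p 0) / (q 0 - p 0), ⟨by positivity, div_le_one_of_le₀ (by linarith) hD.le⟩, ?_⟩
  dsimp only
  rw [eq_pt_iff]
  simp only [PiLp.add_apply, PiLp.smul_apply, PiLp.sub_apply, smul_eq_mul, hs]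
  refine ⟨by field_simp; ring, by field_simp⟩

lemma pl_mem_Icc {lo hi : ℝ} {x₀ y₀ x : ℝ} {l : List (ℝ × ℝ)}
    (hy : ∀ a ∈ (x₀, y₀) :: l, a.2 ∈ Icc lo hi) (hx : x₀ ≤ x) :
    pl ((x₀, y₀) :: l) x ∈ Icc lo hi := by
  induction l generalizing x₀ y₀ with
  | nil => exact hy _ List.mem_cons_self
  | cons a rest ih =>
    obtain ⟨x₁, y₁⟩ := a
    obtain ⟨hlo₀, hhi₀⟩ := hy (x₀, y₀) List.mem_cons_self
    obtain ⟨hlo₁, hhi₁⟩ := hy (x₁, y₁) (by simp)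
    rw [pl]
    split_ifs with hx₁
    · have ht₀ : 0 ≤ (x - x₀) / (x₁ - x₀) := div_nonneg (by linarith) (by linarith)
      have ht₁ : (x - x₀) / (x₁ - x₀) ≤ 1 := div_le_one_of_le₀ (by linarith) (by linarith)
      rw [mul_div_assoc]
      constructor <;> nlinarith
    · exact ih (fun a ha => hy a (List.mem_cons_of_mem _ ha)) (le_of_not_ge hx₁)

lemma sum_smul_mem_convexHull_four {E : Type*} [AddCommGroup E] [Module ℝ E] {s : Set E}
    {v₁ v₂ v₃ v₄ : E} (h₁ : v₁ ∈ s) (h₂ : v₂ ∈ s) (h₃ : v₃ ∈ s) (h₄ : v₄ ∈ s) {c₁ c₂ c₃ c₄ : ℝ}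
    (hc₁ : 0 ≤ c₁) (hc₂ : 0 ≤ c₂) (hc₃ : 0 ≤ c₃) (hc₄ : 0 ≤ c₄) (hc : c₁ + c₂ + c₃ + c₄ = 1) :
    c₁ • v₁ + c₂ • v₂ + c₃ • v₃ + c₄ • v₄ ∈ convexHull ℝ s := by
  have key := (convex_convexHull ℝ s).sum_mem (t := Finset.univ) (w := ![c₁, c₂, c₃, c₄])
    (z := ![v₁, v₂, v₃, v₄]) ?_ ?_ ?_
  · simpa [Fin.sum_univ_four, add_assoc] using key
  · intro i _; fin_cases i <;> assumption
  · simpa [Fin.sum_univ_four, add_assoc] using hc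
  · intro i _; fin_cases i <;> exact subset_convexHull ℝ s ‹_›

lemma diamond_subset_convexHull {x₀ y₀ a b : ℝ} (ha : 0 < a) (hb : 0 < b) :
    {w : E2 | b * |w 0 - x₀| + a * |w 1 - y₀| ≤ a * b} ⊆
      convexHull ℝ {pt (x₀ - a) y₀, pt x₀ (y₀ - b), pt (x₀ + a) y₀, pt x₀ (y₀ + b)} := by
  intro w hw
  set u := w 0 - x₀
  set v := w 1 - y₀
  -- `u` is shared between the left and right vertices, `v` between the bottom and top ones
  have hw' : w = ((a * b - a * |v| - b * u) / (2 * a * b)) • pt (x₀ - a) y₀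
      + ((|v| - v) / (2 * b)) • pt x₀ (y₀ - b)
      + ((a * b - a * |v| + b * u) / (2 * a * b)) • pt (x₀ + a) y₀
      + ((|v| + v) / (2 * b)) • pt x₀ (y₀ + b) := by
    ext i
    fin_cases i
    · simp [u]
      field_simp
      ring
    · simp [v]
      field_simp
      ring
  have hu := abs_le.mp (le_refl |u|)
  have hv := abs_le.mp (le_refl |v|)
  have hw : b * |u| + a * |v| ≤ a * b := hw
  rw [hw']
  apply sum_smul_mem_convexHull_four (by simp) (by simp) (by simp) (by simp)
  · exact div_nonneg (by nlinarith) (by positivity)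
  · exact div_nonneg (by linarith) (by positivity)
  · exact div_nonneg (by nlinarith) (by positivity)
  · exact div_nonneg (by linarith) (by positivity)
  · field_simp; ring

lemma le_of_sq_add_sq_eq_one {x y : ℝ} (h : x ^ 2 + y ^ 2 = 1) (hy : |y| ≤ 0.6) (hx : -0.8 < x) :
    0.8 ≤ x := by
  by_contra! hx'
  nlinarith [sq_abs y, abs_nonneg y]

section Chord

variable {ε p₀ p₁ q₀ q₁ s : ℝ}

lemma sq_add_sq_lt_of_upper_slot (hε₀ : 0 < ε) (hε : ε ≤ 1 / 100) (hp₀ : 0 ≤ p₀)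
    (hp₁ : 0 ≤ p₁) (hq₁ : q₁ ≤ 0.6) (hD : 0.8 ≤ q₀ - p₀) (hpq : (q₀ - p₀) ^ 2 + (q₁ - p₁) ^ 2 = 1)
    (hs : q₁ - p₁ = s * (q₀ - p₀)) (hslope : 0.75 - 2.5 * ε ≤ s)
    (hslot : 0.6 - ε / 2 ≤ p₁ + s * (0.8 - p₀))
    (hroof : (0.3 - ε / 2) * (q₀ - (0.8 + ε / 2)) ≤ (0.6 - q₁) * (0.4 - ε / 2)) :
    p₀ ^ 2 + p₁ ^ 2 < ε ^ 2 := by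
  obtain ⟨d, rfl⟩ : ∃ d, q₀ = 0.8 + d := ⟨q₀ - 0.8, by ring⟩
  have hpd : p₀ ≤ d := by linarith
  have hq₁d : 0.6 - ε / 2 + (0.75 - 2.5 * ε) * d ≤ q₁ := by
    have : (0.75 - 2.5 * ε) * d ≤ s * d := mul_le_mul_of_nonneg_right hslope (by linarith)
    linear_combination hslot + this - hs
  have hd : d ≤ 0.6 * ε := by
    have := mul_le_mul_of_nonneg_right (show 0.6 - q₁ ≤ ε / 2 - (0.75 - 2.5 * ε) * d by linarith)
      (show (0 : ℝ) ≤ 0.4 - ε / 2 by linarith)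
    by_contra! h
    nlinarith [mul_lt_mul_of_pos_right h
        (show (0 : ℝ) < 0.6 - 1.875 * ε + 1.25 * ε ^ 2 by nlinarith),
      mul_nonneg hε₀.le (show (0 : ℝ) ≤ 0.01 - 0.625 * ε by linarith)]
  have hu : 0.6 - 1.4 * d ≤ q₁ - p₁ := by
    have hu₀ : 0 ≤ q₁ - p₁ := by rw [hs]; nlinarith
    have hD' : (0.8 + d - p₀) ^ 2 ≤ (0.8 + d) ^ 2 := pow_le_pow_left₀ (by linarith) (by linarith) 2
    by_contra! h
    nlinarith [mul_self_lt_mul_self hu₀ h, mul_nonneg (show 0 ≤ d by linarith)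
      (show (0 : ℝ) ≤ 0.08 - 2.96 * d by linarith)]
  have hp₁' : p₁ ≤ 0.78 * ε := by
    by_contra! h
    nlinarith [mul_le_mul_of_nonneg_right hd (show (0 : ℝ) ≤ 0.26 - 0.2 * ε by linarith),
      mul_nonneg hε₀.le (show (0 : ℝ) ≤ 0.006 - 0.02 * ε by linarith)]
  have hp₀' : p₀ ≤ 0.6 * ε := hpd.trans hd
  nlinarith [mul_le_mul hp₀' hp₀' hp₀ (by linarith), mul_le_mul hp₁' hp₁' hp₁ (by linarith)]

lemma false_of_unit_chord_through_gaps (hε₀ : 0 < ε) (hε : ε ≤ 1 / 100) (hp₀ : 0 ≤ p₀)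
    (hp₁ : 0 ≤ p₁) (hp₁' : p₁ ≤ 2 * ε) (hp : ε ^ 2 < p₀ ^ 2 + p₁ ^ 2) (hq₁ : 0 ≤ q₁)
    (hq₁' : q₁ ≤ 0.6) (hD : 0.8 ≤ q₀ - p₀) (hpq : (q₀ - p₀) ^ 2 + (q₁ - p₁) ^ 2 = 1)
    (hs : q₁ - p₁ = s * (q₀ - p₀)) (hgap : |p₁ + s * (0.4 - p₀) - 0.3| ≤ ε / 2)
    (hslot : p₁ + s * (0.8 - p₀) ≤ ε / 2 ∨ 0.6 - ε / 2 ≤ p₁ + s * (0.8 - p₀))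
    (hroof : (0.3 - ε / 2) * (q₀ - (0.8 + ε / 2)) ≤ (0.6 - q₁) * (0.4 - ε / 2)) : False := by
  obtain ⟨hgap₁, hgap₂⟩ := abs_le.mp hgap
  rcases hslot with hlow | hhigh
  · have hslope : s ≤ 2.5 * ε - 0.75 := by linarith
    nlinarith [mul_le_mul_of_nonpos_left hD (show s ≤ 0 by linarith)]
  · exact hp.not_gt (sq_add_sq_lt_of_upper_slot hε₀ hε hp₀ hp₁ hq₁' hD hpq hs (by linarith)
      hhigh hroof)

end Chord

section Tunnel

variable {ε : ℝ}

lemma pt_mem_interior_OT2 (hε : ε < 0.6) {y : ℝ} (hy : |y - 0.3| < 0.3 - ε / 2) :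
    pt 0.8 y ∈ interior (OT2 ε) := by
  set a : ℝ := 0.4 - ε / 2
  set b : ℝ := 0.3 - ε / 2
  have ha : 0 < a := by norm_num [a]; linarith
  have hb : 0 < b := by norm_num [b]; linarith
  have hOT2 : OT2 ε = convexHull ℝ {pt (0.8 - a) 0.3, pt 0.8 (0.3 - b), pt (0.8 + a) 0.3,
      pt 0.8 (0.3 + b)} := by
    rw [OT2]; congr 3 <;> simp only [a, b] <;> ring_nf
  have hopen : IsOpen {w : E2 | b * |w 0 - 0.8| + a * |w 1 - 0.3| < a * b} :=
    isOpen_lt (by fun_prop) (by fun_prop)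
  refine interior_maximal (fun w hw => ?_) hopen ?_
  · rw [hOT2]
    exact diamond_subset_convexHull ha hb
      (show b * |w 0 - 0.8| + a * |w 1 - 0.3| ≤ a * b from le_of_lt hw)
  · show b * |0.8 - 0.8| + a * |y - 0.3| < a * b
    rw [sub_self, abs_zero, mul_zero, zero_add]
    exact mul_lt_mul_of_pos_left hy ha

lemma coord_one_mem_Icc_of_mem_tunnel (hε₀ : 0 ≤ ε) (hε : ε ≤ 0.6) {z : E2} (hz : z ∈ tunnel ε) :
    z 1 ∈ Icc 0 0.6 := by
  obtain ⟨⟨hz₀, -, hlo, hhi⟩, -⟩ := hz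
  have hlower : pl (tunnelLowerPts ε) (z 0) ∈ Icc 0 0.6 := by
    refine pl_mem_Icc ?_ hz₀
    norm_num
    constructor <;> linarith
  have hupper : pl (tunnelUpperPts ε) (z 0) ∈ Icc 0 0.6 := by
    refine pl_mem_Icc ?_ hz₀
    norm_num
    constructor <;> linarith
  exact ⟨hlower.1.trans hlo, hhi.trans hupper.2⟩

lemma abs_sub_le_of_pt_mem_tunnel (hε : ε < 0.8) {y : ℝ}
    (h : pt 0.4 y ∈ tunnel ε) : |y - 0.3| ≤ ε / 2 := by
  obtain ⟨⟨-, -, hlo, hhi⟩, -⟩ := h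
  have hne : (0.4 : ℝ) - ε / 2 ≠ 0 := by norm_num; linarith
  simp only [pt_apply_zero, pt_apply_one, tunnelLowerPts, tunnelUpperPts, pl] at hlo hhi
  rw [if_neg (by norm_num; linarith), if_pos le_rfl, mul_div_assoc, div_self hne] at hlo hhi
  exact abs_le.mpr ⟨by linarith, by linarith⟩

lemma le_or_le_of_pt_mem_tunnel (hε : ε < 0.6) {y : ℝ} (h : pt 0.8 y ∈ tunnel ε) :
    y ≤ ε / 2 ∨ 0.6 - ε / 2 ≤ y := by
  by_contra! hy
  exact h.2 (Or.inl (Or.inr (pt_mem_interior_OT2 hε (abs_lt.mpr ⟨by linarith, by linarith⟩))))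

lemma roof_of_mem_tunnel (hε₀ : 0 ≤ ε) (hε : ε < 0.6) {z : E2} (hz : z ∈ tunnel ε)
    (hz₀ : z 0 ≤ 1.2) : (0.3 - ε / 2) * (z 0 - (0.8 + ε / 2)) ≤ (0.6 - z 1) * (0.4 - ε / 2) := by
  have hz₁ := coord_one_mem_Icc_of_mem_tunnel hε₀ hε.le hz
  by_cases hz₀' : z 0 ≤ 0.8 + ε / 2
  · nlinarith [hz₁.2]
  obtain ⟨⟨-, -, -, hhi⟩, -⟩ := hz
  simp only [tunnelUpperPts, pl] at hhi
  rw [if_neg (by linarith), if_neg (by norm_num; linarith), if_neg (by linarith),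
    if_neg (by linarith), if_neg hz₀', if_pos hz₀,
    show (1.2 : ℝ) - (0.8 + ε / 2) = 0.4 - ε / 2 by ring] at hhi
  have ha : (0 : ℝ) < 0.4 - ε / 2 := by norm_num; linarith
  have := mul_le_mul_of_nonneg_right hhi ha.le
  rw [add_mul, div_mul_cancel₀ _ ha.ne'] at this
  linarith

lemma floor_of_mem_tunnel (hε₀ : 0 ≤ ε) (hε : ε < 0.6) {z : E2} (hz : z ∈ tunnel ε)
    (hz₀ : z 0 ≤ 1.2) : (0.3 - ε / 2) * (z 0 - (0.8 + ε / 2)) ≤ z 1 * (0.4 - ε / 2) := by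
  have hz₁ := coord_one_mem_Icc_of_mem_tunnel hε₀ hε.le hz
  by_cases hz₀' : z 0 ≤ 0.8 + ε / 2
  · nlinarith [hz₁.1]
  obtain ⟨⟨-, -, hlo, -⟩, -⟩ := hz
  simp only [tunnelLowerPts, pl] at hlo
  rw [if_neg (by linarith), if_neg (by norm_num; linarith), if_neg (by linarith),
    if_neg (by linarith), if_neg hz₀', if_pos hz₀,
    show (1.2 : ℝ) - (0.8 + ε / 2) = 0.4 - ε / 2 by ring] at hlo
  have ha : (0 : ℝ) < 0.4 - ε / 2 := by norm_num; linarith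
  have := mul_le_mul_of_nonneg_right hlo ha.le
  rw [add_mul, div_mul_cancel₀ _ ha.ne'] at this
  linarith

lemma exists_slope_of_segment_subset_tunnel (hε : ε < 0.6) {p q : E2}
    (hseg : segment ℝ p q ⊆ tunnel ε) (hp₀ : p 0 ≤ 0.4) (hq₀ : 0.8 ≤ q 0) :
    ∃ s, q 1 - p 1 = s * (q 0 - p 0) ∧ |p 1 + s * (0.4 - p 0) - 0.3| ≤ ε / 2 ∧
      (p 1 + s * (0.8 - p 0) ≤ ε / 2 ∨ 0.6 - ε / 2 ≤ p 1 + s * (0.8 - p 0)) := by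
  have hpq : p 0 < q 0 := by linarith
  have hs : q 1 - p 1 = (q 1 - p 1) / (q 0 - p 0) * (q 0 - p 0) :=
    (div_mul_cancel₀ _ (sub_pos.mpr hpq).ne').symm
  refine ⟨_, hs, ?_, ?_⟩
  · exact abs_sub_le_of_pt_mem_tunnel (by linarith)
      (hseg (pt_mem_segment hpq hs hp₀ (by linarith)))
  · exact le_or_le_of_pt_mem_tunnel hε (hseg (pt_mem_segment hpq hs (by linarith) hq₀))

lemma not_segment_subset_tunnel_of_mem_Q1 (hε₀ : 0 < ε) (hε : ε ≤ 1 / 100) {p q : E2}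
    (hp : p ∈ Q1 (pt 0 0) (2 * ε) \ Q1 (pt 0 0) ε) (hpq : dist p q = 1) :
    ¬ segment ℝ p q ⊆ tunnel ε := by
  intro hseg
  obtain ⟨⟨hp2ε, hp₀, hp₁⟩, hpε⟩ := hp
  have hpε' : ε < dist p (pt 0 0) := lt_of_not_ge fun h => hpε ⟨h, hp₀, hp₁⟩
  simp only [pt_apply_zero, pt_apply_one] at hp₀ hp₁
  have hp_sq := dist_sq_eq p (pt 0 0)
  simp only [pt_apply_zero, pt_apply_one, sub_zero] at hp_sq
  have hpq_sq : (q 0 - p 0) ^ 2 + (q 1 - p 1) ^ 2 = 1 := by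
    rw [← dist_sq_eq, dist_comm, hpq, one_pow]
  have hq := hseg (right_mem_segment ℝ p q)
  have hq₁ := coord_one_mem_Icc_of_mem_tunnel hε₀.le (by linarith) hq
  have hp₀' : p 0 ≤ 2 * ε := by nlinarith
  have hp₁' : p 1 ≤ 2 * ε := by nlinarith
  have hD : 0.8 ≤ q 0 - p 0 := le_of_sq_add_sq_eq_one hpq_sq
    (abs_le.mpr ⟨by linarith [hq₁.1], by linarith [hq₁.2]⟩) (by linarith [hq.1.1])
  obtain ⟨s, hs, hgap, hslot⟩ :=
    exists_slope_of_segment_subset_tunnel (by linarith) hseg (by linarith) (by linarith)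
  exact false_of_unit_chord_through_gaps hε₀ hε hp₀ hp₁ hp₁' (by nlinarith) hq₁.1 hq₁.2 hD
    hpq_sq hs hgap hslot
    (roof_of_mem_tunnel hε₀.le (by linarith) hq (by nlinarith))

lemma not_segment_subset_tunnel_of_mem_Q4 (hε₀ : 0 < ε) (hε : ε ≤ 1 / 100) {p q : E2}
    (hp : p ∈ Q4 (pt 0 0.6) (2 * ε) \ Q4 (pt 0 0.6) ε) (hpq : dist p q = 1) :
    ¬ segment ℝ p q ⊆ tunnel ε := by
  intro hseg
  obtain ⟨⟨hp2ε, hp₀, hp₁⟩, hpε⟩ := hp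
  have hpε' : ε < dist p (pt 0 0.6) := lt_of_not_ge fun h => hpε ⟨h, hp₀, hp₁⟩
  simp only [pt_apply_zero, pt_apply_one] at hp₀ hp₁
  have hp_sq := dist_sq_eq p (pt 0 0.6)
  simp only [pt_apply_zero, pt_apply_one, sub_zero] at hp_sq
  have hpq_sq : (q 0 - p 0) ^ 2 + (q 1 - p 1) ^ 2 = 1 := by
    rw [← dist_sq_eq, dist_comm, hpq, one_pow]
  have hq := hseg (right_mem_segment ℝ p q)
  have hq₁ := coord_one_mem_Icc_of_mem_tunnel hε₀.le (by linarith) hq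
  have hp₀' : p 0 ≤ 2 * ε := by nlinarith
  have hp₁' : 0.6 - p 1 ≤ 2 * ε := by nlinarith
  have hD : 0.8 ≤ q 0 - p 0 := le_of_sq_add_sq_eq_one hpq_sq
    (abs_le.mpr ⟨by linarith [hq₁.1], by linarith [hq₁.2]⟩) (by linarith [hq.1.1])
  obtain ⟨s, hs, hgap, hslot⟩ :=
    exists_slope_of_segment_subset_tunnel (by linarith) hseg (by linarith) (by linarith)
  refine false_of_unit_chord_through_gaps (p₁ := 0.6 - p 1) (q₁ := 0.6 - q 1) (s := -s) hε₀ hε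
    hp₀ (by linarith) hp₁' (by nlinarith) (by linarith [hq₁.2]) (by linarith [hq₁.1]) hD
    (by linear_combination hpq_sq) (by linear_combination -hs) ?_ ?_ ?_
  · rw [← abs_neg]; convert hgap using 2; ring
  · rcases hslot with h | h
    · right; linarith
    · left; linarith
  · convert floor_of_mem_tunnel hε₀.le (by linarith) hq (by nlinarith) using 2; ring

end Tunnel

/-- no unit edge inside the tunnel can start in the annular parts of the
entrance quadrants between radius `ε` and radius `2ε`. -/
theorem tunnel_annulus_blocked (ε : ℝ) (hε0 : 0 < ε) (hε : ε ≤ 1 / 100) :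
    (∀ p ∈ Q1 (pt 0 0) (2 * ε) \ Q1 (pt 0 0) ε, ∀ q : E2, dist p q = 1 →
      ¬ segment ℝ p q ⊆ tunnel ε) ∧
    (∀ p ∈ Q4 (pt 0 0.6) (2 * ε) \ Q4 (pt 0 0.6) ε, ∀ q : E2, dist p q = 1 →
      ¬ segment ℝ p q ⊆ tunnel ε) :=
  ⟨fun _ hp _ hpq => not_segment_subset_tunnel_of_mem_Q1 hε0 hε hp hpq,
    fun _ hp _ hpq => not_segment_subset_tunnel_of_mem_Q4 hε0 hε hp hpq⟩
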